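/- arXiv:1602.08294 — 2 statements merged into one kernel-verified Lean document; each statement's English description precedes it below -/
import Mathlib

section
/- Let a, b₁, b₂, γ be positive reals, c ≠ 0 a real parameter, and ω > 0 a real number with h(ω²) = 0. Then for every natural number j, both iω and −iω are roots of the characteristic function Δ_{c,τ} with delay τ = τ^{(j)}(ω). -/
/-!
On the imaginary axis Δ(iω) = p(iω) − c² q(iω) e^{−2iωτ}, where p and q are the two polynomial
factors of Δ, so iω is a root exactly when e^{−2iωτ} = p(iω) / (c² q(iω)). The numbers a*(ω), b*(ω)
are built so that this quotient is b* − i a*, and since h(ω²) = |p(iω)|² − c⁴ |q(iω)|² its squared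
modulus is 1 + h(ω²) / (c² N(ω)). Hence at a root of h it lies on the unit circle, and τ^{(j)}(ω)
is chosen so that 2ωτ is an argument of b* + i a*. The root −iω is the conjugate one, Δ having
real coefficients.
-/

noncomputable section

open Real

/-- A = b₁+b₂+2a -/
def Ac (a b1 b2 : ℝ) : ℝ := b1 + b2 + 2*a
/-- B = 2a(b₁+b₂)+a²+b₁b₂+2γ -/
def Bc (a b1 b2 γ : ℝ) : ℝ := 2*a*(b1+b2) + a^2 + b1*b2 + 2*γ
/-- C = (a+b₁)(ab₂+γ)+(a+b₂)(ab₁+γ) -/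
def Cc (a b1 b2 γ : ℝ) : ℝ := (a+b1)*(a*b2+γ) + (a+b2)*(a*b1+γ)
/-- D = (ab₁+γ)(ab₂+γ) -/
def Dc (a b1 b2 γ : ℝ) : ℝ := (a*b1+γ)*(a*b2+γ)
/-- P = A² − 2B -/
def Pc (a b1 b2 γ : ℝ) : ℝ := (Ac a b1 b2)^2 - 2*(Bc a b1 b2 γ)
/-- Q = B² + 2D − 2AC − c⁴ -/
def Qc (a b1 b2 γ c : ℝ) : ℝ :=
  (Bc a b1 b2 γ)^2 + 2*(Dc a b1 b2 γ) - 2*(Ac a b1 b2)*(Cc a b1 b2 γ) - c^4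
/-- R = C² − 2BD − c⁴(b₁²+b₂²) -/
def Rc (a b1 b2 γ c : ℝ) : ℝ :=
  (Cc a b1 b2 γ)^2 - 2*(Bc a b1 b2 γ)*(Dc a b1 b2 γ) - c^4*(b1^2+b2^2)
/-- S = D² − c⁴b₁²b₂² -/
def Sc (a b1 b2 γ c : ℝ) : ℝ := (Dc a b1 b2 γ)^2 - c^4*b1^2*b2^2
/-- h(z) = z⁴ + Pz³ + Qz² + Rz + S -/
def hq (a b1 b2 γ c z : ℝ) : ℝ :=
  z^4 + Pc a b1 b2 γ*z^3 + Qc a b1 b2 γ c*z^2 + Rc a b1 b2 γ c*z + Sc a b1 b2 γ c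
/-- h′(z) = 4z³ + 3Pz² + 2Qz + R -/
def hq' (a b1 b2 γ c z : ℝ) : ℝ :=
  4*z^3 + 3*(Pc a b1 b2 γ)*z^2 + 2*(Qc a b1 b2 γ c)*z + Rc a b1 b2 γ c
/-- The characteristic function Δ_{c,τ}(λ) of the linearization at the trivial equilibrium. -/
def charFun (a b1 b2 γ c τ : ℝ) (lam : ℂ) : ℂ :=
  (lam^2 + (a+b1 : ℝ)*lam + (a*b1+γ : ℝ)) * (lam^2 + (a+b2 : ℝ)*lam + (a*b2+γ : ℝ))
    - (c^2 : ℝ) * (lam + (b1 : ℝ)) * (lam + (b2 : ℝ)) * Complex.exp ((-2) * lam * (τ : ℝ))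
/-- N(ω) = c²[(b₁+b₂)²ω² + (ω²−b₁b₂)²] -/
def Nfun (b1 b2 c ω : ℝ) : ℝ := c^2*((b1+b2)^2*ω^2 + (ω^2 - b1*b2)^2)
/-- a*(ω) -/
def aStar (a b1 b2 γ c ω : ℝ) : ℝ :=
  ((ω^4 - Bc a b1 b2 γ*ω^2 + Dc a b1 b2 γ)*(b1+b2)*ω
    + (Ac a b1 b2*ω^3 - Cc a b1 b2 γ*ω)*(b1*b2 - ω^2)) / Nfun b1 b2 c ω
/-- b*(ω) -/
def bStar (a b1 b2 γ c ω : ℝ) : ℝ :=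
  ((ω^4 - Bc a b1 b2 γ*ω^2 + Dc a b1 b2 γ)*(b1*b2 - ω^2)
    + (-(Ac a b1 b2)*ω^3 + Cc a b1 b2 γ*ω)*(b1+b2)*ω) / Nfun b1 b2 c ω
/-- the critical delays τ^{(j)}(ω) -/
def tauJ (a b1 b2 γ c : ℝ) (j : ℕ) (ω : ℝ) : ℝ :=
  if 0 ≤ aStar a b1 b2 γ c ω then
    (1/(2*ω)) * (Real.arccos (bStar a b1 b2 γ c ω) + 2*(j:ℝ)*Real.pi)
  else
    (1/(2*ω)) * (2*Real.pi - Real.arccos (bStar a b1 b2 γ c ω) + 2*(j:ℝ)*Real.pi)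

open Complex ComplexConjugate in
theorem charFun_conj (a b1 b2 γ c τ : ℝ) (z : ℂ) :
    charFun a b1 b2 γ c τ (conj z) = conj (charFun a b1 b2 γ c τ z) := by
  simp only [charFun, map_sub, map_mul, map_add, map_pow, conj_ofReal, ← exp_conj, map_neg,
    map_ofNat]

theorem Nfun_eq (b1 b2 c ω : ℝ) :
    Nfun b1 b2 c ω = c^2 * ((ω^2 + b1^2) * (ω^2 + b2^2)) := by
  unfold Nfun; ring

theorem Nfun_pos {b1 b2 c ω : ℝ} (hc : c ≠ 0) (hω : ω ≠ 0) : 0 < Nfun b1 b2 c ω := by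
  rw [Nfun_eq]; positivity

theorem aStar_sq_add_bStar_sq (a b1 b2 γ : ℝ) {c ω : ℝ} (hc : c ≠ 0) (hω : ω ≠ 0) :
    aStar a b1 b2 γ c ω ^ 2 + bStar a b1 b2 γ c ω ^ 2
      = 1 + hq a b1 b2 γ c (ω^2) / (c^2 * Nfun b1 b2 c ω) := by
  have hN := (Nfun_pos (b1 := b1) (b2 := b2) hc hω).ne'
  unfold aStar bStar
  field_simp
  rw [Nfun_eq]
  unfold hq Pc Qc Rc Sc Ac Bc Cc Dc
  ring

theorem cos_sin_arccos_of_sq_add_sq_eq_one {x y : ℝ} (h : x^2 + y^2 = 1) :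
    cos (if 0 ≤ y then arccos x else 2*π - arccos x) = x ∧
      sin (if 0 ≤ y then arccos x else 2*π - arccos x) = y := by
  have hx : -1 ≤ x ∧ x ≤ 1 := abs_le.mp ((sq_le_one_iff_abs_le_one x).mp (by nlinarith))
  have hsin : sin (arccos x) = |y| := by
    rw [sin_arccos, ← sqrt_sq_eq_abs]; congr 1; linarith
  split_ifs with hy
  · exact ⟨cos_arccos hx.1 hx.2, hsin.trans (abs_of_nonneg hy)⟩
  · rw [cos_two_pi_sub, sin_two_pi_sub, hsin, abs_of_neg (not_le.mp hy), neg_neg]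
    exact ⟨cos_arccos hx.1 hx.2, rfl⟩

theorem two_mul_mul_tauJ (a b1 b2 γ c : ℝ) (j : ℕ) {ω : ℝ} (hω : ω ≠ 0) :
    2 * ω * tauJ a b1 b2 γ c j ω
      = (if 0 ≤ aStar a b1 b2 γ c ω then arccos (bStar a b1 b2 γ c ω)
          else 2*π - arccos (bStar a b1 b2 γ c ω)) + j * (2*π) := by
  unfold tauJ
  split_ifs <;> field_simp

open Complex in
theorem exp_neg_two_mul_I_mul_tauJ (a b1 b2 γ c : ℝ) (j : ℕ) {ω : ℝ} (hω : ω ≠ 0)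
    (h : aStar a b1 b2 γ c ω ^ 2 + bStar a b1 b2 γ c ω ^ 2 = 1) :
    exp (-2 * (I * ω) * (tauJ a b1 b2 γ c j ω : ℝ))
      = bStar a b1 b2 γ c ω - aStar a b1 b2 γ c ω * I := by
  obtain ⟨hcos, hsin⟩ := cos_sin_arccos_of_sq_add_sq_eq_one ((add_comm _ _).trans h)
  have harg : -2 * (I * ω) * (tauJ a b1 b2 γ c j ω : ℝ)
      = ((-(2 * ω * tauJ a b1 b2 γ c j ω) : ℝ) : ℂ) * I := by
    push_cast; ring
  rw [harg, exp_mul_I, ← ofReal_cos, ← ofReal_sin, Real.cos_neg, Real.sin_neg,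
    two_mul_mul_tauJ _ _ _ _ _ _ hω, Real.cos_add_nat_mul_two_pi, Real.sin_add_nat_mul_two_pi,
    hcos, hsin]
  push_cast; ring

open Complex in
theorem ofReal_sq_mul_bStar_sub_aStar_mul_I (a b1 b2 γ : ℝ) {c ω : ℝ} (hc : c ≠ 0)
    (hω : ω ≠ 0) :
    ((c^2 : ℝ) : ℂ) * (I * ω + (b1 : ℝ)) * (I * ω + (b2 : ℝ))
        * (bStar a b1 b2 γ c ω - aStar a b1 b2 γ c ω * I)
      = ((I * ω)^2 + (a+b1 : ℝ) * (I * ω) + (a*b1+γ : ℝ))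
        * ((I * ω)^2 + (a+b2 : ℝ) * (I * ω) + (a*b2+γ : ℝ)) := by
  have hN := (Nfun_pos (b1 := b1) (b2 := b2) hc hω).ne'
  apply Complex.ext <;>
    simp only [pow_two, ofReal_mul, ofReal_add, mul_re, mul_im, add_re, add_im, sub_re, sub_im,
      ofReal_re, ofReal_im, I_re, I_im, mul_zero, mul_one, zero_mul, one_mul, add_zero, zero_add,
      sub_zero, zero_sub, sub_self, mul_neg, sub_neg_eq_add] <;>
    unfold aStar bStar <;> field_simp <;> unfold Nfun Ac Bc Cc Dc <;> ring

theorem stmt7_general (a b1 b2 γ c : ℝ) (hc : c ≠ 0)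
    (ω : ℝ) (hω : 0 < ω) (hroot : hq a b1 b2 γ c (ω^2) = 0) :
    ∀ j : ℕ,
      charFun a b1 b2 γ c (tauJ a b1 b2 γ c j ω) (Complex.I * (ω : ℂ)) = 0 ∧
      charFun a b1 b2 γ c (tauJ a b1 b2 γ c j ω) (-(Complex.I * (ω : ℂ))) = 0 := by
  intro j
  have hω0 : ω ≠ 0 := hω.ne'
  have hunit : aStar a b1 b2 γ c ω ^ 2 + bStar a b1 b2 γ c ω ^ 2 = 1 := by
    rw [aStar_sq_add_bStar_sq a b1 b2 γ hc hω0, hroot, zero_div, add_zero]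
  have hroot_I : charFun a b1 b2 γ c (tauJ a b1 b2 γ c j ω) (Complex.I * ω) = 0 := by
    rw [charFun, exp_neg_two_mul_I_mul_tauJ a b1 b2 γ c j hω0 hunit,
      ofReal_sq_mul_bStar_sub_aStar_mul_I a b1 b2 γ hc hω0, sub_self]
  have hconj : -(Complex.I * ω) = (starRingEnd ℂ) (Complex.I * ω) := by simp
  refine ⟨hroot_I, ?_⟩
  rw [hconj, charFun_conj, hroot_I, map_zero]

/-- if h(ω²) = 0 (ω > 0, c ≠ 0), then for every j, ±iω are roots of
Δ_{c,τ} with τ = τ^{(j)}(ω). -/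
theorem stmt7 (a b1 b2 γ c : ℝ)
    (ha : 0 < a) (hb1 : 0 < b1) (hb2 : 0 < b2) (hγ : 0 < γ) (hc : c ≠ 0)
    (ω : ℝ) (hω : 0 < ω) (hroot : hq a b1 b2 γ c (ω^2) = 0) :
    ∀ j : ℕ,
      charFun a b1 b2 γ c (tauJ a b1 b2 γ c j ω) (Complex.I * (ω : ℂ)) = 0 ∧
      charFun a b1 b2 γ c (tauJ a b1 b2 γ c j ω) (-(Complex.I * (ω : ℂ))) = 0 :=
  stmt7_general a b1 b2 γ c hc ω hω hroot
end
end

section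
/- Let a, b₁, b₂, γ be positive reals and c, τ real parameters. Then λ = 0 is a root of Δ_{c,τ} of multiplicity at least two (i.e. Δ_{c,τ}(0) = 0 and the λ-derivative of Δ_{c,τ} vanishes at 0) if and only if c²b₁b₂ = (ab₁+γ)(ab₂+γ) and τ = (b₁+b₂)/(2b₁b₂) − (a+b₁)/(2(γ+ab₁)) − (a+b₂)/(2(γ+ab₂)). -/
/-!
At `λ = 0` the exponential factor is `1` and its derivative is `-2τ`, so
`Δ(0) = D - c²b₁b₂` and `Δ'(0) = C - c²(b₁ + b₂) + 2τc²b₁b₂`. Once `c²b₁b₂ = D`, the second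
equation is linear in `τ`, and the partial fractions `C / D = (a + b₁)/(ab₁ + γ) + (a + b₂)/(ab₂ + γ)`
turn its solution into the stated formula.
-/

noncomputable section

open Real

lemma hasDerivAt_quadratic (p q : ℂ) (z : ℂ) :
    HasDerivAt (fun w : ℂ => w ^ 2 + p * w + q) (2 * z + p) z := by
  simpa using (((hasDerivAt_id z).pow 2).add ((hasDerivAt_id z).const_mul p)).add_const q

lemma hasDerivAt_charFun (a b1 b2 γ c τ : ℝ) (lam : ℂ) :
    HasDerivAt (charFun a b1 b2 γ c τ)
      ((2 * lam + (a + b1 : ℝ)) * (lam ^ 2 + (a + b2 : ℝ) * lam + (a * b2 + γ : ℝ))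
        + (lam ^ 2 + (a + b1 : ℝ) * lam + (a * b1 + γ : ℝ)) * (2 * lam + (a + b2 : ℝ))
        - (c ^ 2 : ℝ) * ((2 * lam + (b1 : ℝ) + (b2 : ℝ))
            - 2 * (τ : ℝ) * (lam + (b1 : ℝ)) * (lam + (b2 : ℝ)))
          * Complex.exp ((-2) * lam * (τ : ℝ))) lam := by
  have hdelay : HasDerivAt (fun w : ℂ => Complex.exp ((-2) * w * (τ : ℝ)))
      (Complex.exp ((-2) * lam * (τ : ℝ)) * ((-2) * (τ : ℝ))) lam := by
    simpa using (((hasDerivAt_id lam).const_mul (-2 : ℂ)).mul_const ((τ : ℝ) : ℂ)).cexp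
  have hfactors : HasDerivAt (fun w : ℂ => ((c ^ 2 : ℝ) : ℂ) * (w + (b1 : ℝ)) * (w + (b2 : ℝ)))
      ((c ^ 2 : ℝ) * (2 * lam + (b1 : ℝ) + (b2 : ℝ))) lam := by
    refine ((((hasDerivAt_id lam).add_const ((b1 : ℝ) : ℂ)).const_mul ((c ^ 2 : ℝ) : ℂ)).mul
      ((hasDerivAt_id lam).add_const ((b2 : ℝ) : ℂ))).congr_deriv ?_
    simp only [id]
    ring
  refine (((hasDerivAt_quadratic _ _ lam).mul (hasDerivAt_quadratic _ _ lam)).sub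
    (hfactors.mul hdelay)).congr_deriv ?_
  ring

lemma charFun_zero (a b1 b2 γ c τ : ℝ) :
    charFun a b1 b2 γ c τ 0 = ((Dc a b1 b2 γ - c ^ 2 * b1 * b2 : ℝ) : ℂ) := by
  simp [charFun, Dc]

lemma deriv_charFun_zero (a b1 b2 γ c τ : ℝ) :
    deriv (charFun a b1 b2 γ c τ) 0
      = ((Cc a b1 b2 γ - c ^ 2 * (b1 + b2) + 2 * τ * c ^ 2 * b1 * b2 : ℝ) : ℂ) := by
  rw [(hasDerivAt_charFun a b1 b2 γ c τ 0).deriv]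
  simp only [Cc, mul_zero, zero_mul, zero_add, ne_eq, OfNat.ofNat_ne_zero, not_false_eq_true,
    zero_pow, Complex.exp_zero, mul_one]
  push_cast
  ring

lemma add_div_eq_Cc_div_Dc {a b1 b2 γ : ℝ} (hd1 : γ + a * b1 ≠ 0) (hd2 : γ + a * b2 ≠ 0) :
    (a + b1) / (2 * (γ + a * b1)) + (a + b2) / (2 * (γ + a * b2))
      = Cc a b1 b2 γ / (2 * Dc a b1 b2 γ) := by
  rw [div_add_div _ _ (by positivity) (by positivity), div_eq_div_iff (by positivity)]
  · rw [Cc, Dc]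
    ring
  · rw [Dc, add_comm (a * b1), add_comm (a * b2)]
    positivity

lemma double_root_conditions_iff {a b1 b2 γ c τ : ℝ} (hb1 : b1 ≠ 0) (hb2 : b2 ≠ 0)
    (hd1 : γ + a * b1 ≠ 0) (hd2 : γ + a * b2 ≠ 0) :
    (Dc a b1 b2 γ - c ^ 2 * b1 * b2 = 0 ∧
        Cc a b1 b2 γ - c ^ 2 * (b1 + b2) + 2 * τ * c ^ 2 * b1 * b2 = 0) ↔
      (c ^ 2 * b1 * b2 = (a * b1 + γ) * (a * b2 + γ) ∧
        τ = (b1 + b2) / (2 * b1 * b2) - (a + b1) / (2 * (γ + a * b1))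
          - (a + b2) / (2 * (γ + a * b2))) := by
  rw [sub_eq_zero, eq_comm, ← Dc]
  refine and_congr_right fun hroot => ?_
  have hc : c ≠ 0 := by
    rintro rfl
    rw [Dc, add_comm (a * b1), add_comm (a * b2)] at hroot
    simp_all
  rw [sub_sub, add_div_eq_Cc_div_Dc hd1 hd2, ← hroot]
  constructor
  · intro hderiv
    field_simp
    linear_combination hderiv
  · rintro rfl
    field_simp
    ring

/-- λ = 0 is a root of Δ_{c,τ} of multiplicity at least two iff
c²b₁b₂ = (ab₁+γ)(ab₂+γ) and τ = (b₁+b₂)/(2b₁b₂) − (a+b₁)/(2(γ+ab₁)) − (a+b₂)/(2(γ+ab₂)). -/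
theorem stmt11 (a b1 b2 γ c τ : ℝ)
    (ha : 0 < a) (hb1 : 0 < b1) (hb2 : 0 < b2) (hγ : 0 < γ) :
    (charFun a b1 b2 γ c τ 0 = 0 ∧ deriv (charFun a b1 b2 γ c τ) 0 = 0) ↔
      (c^2*b1*b2 = (a*b1+γ)*(a*b2+γ) ∧
        τ = (b1+b2)/(2*b1*b2) - (a+b1)/(2*(γ+a*b1)) - (a+b2)/(2*(γ+a*b2))) := by
  rw [charFun_zero, deriv_charFun_zero, Complex.ofReal_eq_zero, Complex.ofReal_eq_zero]
  exact double_root_conditions_iff hb1.ne' hb2.ne' (by positivity) (by positivity)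
end
end
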